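/- Fix integers k ≥ 1, d ≥ 1 and ℓ with 1 ≤ ℓ ≤ min(d,k). Define g_ℓ : (0,1] → ℝ by g_ℓ(x) = e^{-2kx}·(ekx/ℓ)^ℓ·(ln(e/x^{ℓ/d}))^{d/2}. Then g_ℓ attains its maximum over (0,1] at some point x* ∈ [ℓ/(4k), min(ℓ/(2k),1)], and sup_{x∈(0,1]} g_ℓ(x) ≤ e^{-ℓ/2}·(e/2)^ℓ·(ln(e·(4k/ℓ)^{ℓ/d}))^{d/2} when ℓ/(4k) ≤ 1. -/

import Mathlib

/-- `g_ℓ(x) = e^{-2kx} (ekx/ℓ)^ℓ (ln(e/x^{ℓ/d}))^{d/2}`. -/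
noncomputable def gl (k d ℓ : ℕ) (x : ℝ) : ℝ :=
  Real.exp (-2 * k * x) * (Real.exp 1 * k * x / ℓ) ^ ℓ *
    (Real.log (Real.exp 1 / x ^ ((ℓ : ℝ) / (d : ℝ)))) ^ ((d : ℝ) / 2)

/-!
On `(0, 1]`, `g_ℓ = exp (glExponent)` where `glExponent x = -2kx + ℓ ln(ekx/ℓ) + (d/2) ln (glLog x)`
and `glLog x = 1 - (ℓ/d) ln x ≥ 1`. The derivative of `glExponent` is
`((ℓ - 2kx) glLog x - ℓ/2) / (x glLog x)`, which is `≥ 0` for `x ≤ ℓ/(4k)` (as `glLog ≥ 1`) and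
`≤ 0` for `x ≥ ℓ/(2k)`; so a maximiser on the compact interval `[ℓ/(4k), ℓ/(2k)]` is a maximiser
on `(0, 1]`. There `e^{-2kx} ≤ e^{-ℓ/2}`, `ekx/ℓ ≤ e/2`, and, `glLog` being decreasing,
`glLog x ≤ glLog (ℓ/(4k)) = ln(e (4k/ℓ)^{ℓ/d})`.
-/

open Real Set

noncomputable def glLog (d ℓ : ℕ) (x : ℝ) : ℝ :=
  1 - ((ℓ : ℝ) / d) * log x

noncomputable def glExponent (k d ℓ : ℕ) (x : ℝ) : ℝ :=
  -2 * k * x + ℓ * log (exp 1 * k * x / ℓ) + ((d : ℝ) / 2) * log (glLog d ℓ x)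

section

variable {k d ℓ : ℕ} {x : ℝ}

lemma one_le_glLog (hx : 0 < x) (hx1 : x ≤ 1) : 1 ≤ glLog d ℓ x := by
  have : ((ℓ : ℝ) / d) * log x ≤ 0 :=
    mul_nonpos_of_nonneg_of_nonpos (by positivity) (log_nonpos hx.le hx1)
  unfold glLog
  linarith

lemma glLog_le_glLog {y : ℝ} (hy : 0 < y) (hyx : y ≤ x) : glLog d ℓ x ≤ glLog d ℓ y := by
  unfold glLog
  gcongr

lemma hasDerivAt_glLog (hx : x ≠ 0) : HasDerivAt (glLog d ℓ) (-((ℓ : ℝ) / d * x⁻¹)) x :=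
  ((hasDerivAt_log hx).const_mul _).const_sub 1

lemma log_exp_one_div_rpow (hx : 0 < x) :
    log (exp 1 / x ^ ((ℓ : ℝ) / d)) = glLog d ℓ x := by
  rw [log_div (exp_ne_zero 1) (by positivity), log_exp, log_rpow hx, glLog]

lemma gl_eq_glLog (hx : 0 < x) :
    gl k d ℓ x = exp (-2 * k * x) * (exp 1 * k * x / ℓ) ^ ℓ * glLog d ℓ x ^ ((d : ℝ) / 2) := by
  rw [gl, log_exp_one_div_rpow hx]

lemma gl_eq_exp_glExponent (hk : 0 < k) (hℓ : 0 < ℓ) (hx : 0 < x) (hx1 : x ≤ 1) :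
    gl k d ℓ x = exp (glExponent k d ℓ x) := by
  have hL : 0 < glLog d ℓ x := one_pos.trans_le (one_le_glLog hx hx1)
  rw [gl_eq_glLog hx, glExponent, exp_add, exp_add, exp_nat_mul, exp_log (by positivity),
    rpow_def_of_pos hL, mul_comm (log _)]

lemma hasDerivAt_glExponent (hk : 0 < k) (hd : 0 < d) (hℓ : 0 < ℓ) (hx : 0 < x) (hx1 : x ≤ 1) :
    HasDerivAt (glExponent k d ℓ)
      ((((ℓ : ℝ) - 2 * k * x) * glLog d ℓ x - ℓ / 2) / (x * glLog d ℓ x)) x := by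
  have hL : 0 < glLog d ℓ x := one_pos.trans_le (one_le_glLog hx hx1)
  have hlinear : HasDerivAt (fun y : ℝ => -2 * (k : ℝ) * y) (-2 * k) x := by
    simpa using (hasDerivAt_id x).const_mul (-2 * (k : ℝ))
  have hscaled : HasDerivAt (fun y : ℝ => exp 1 * k * y / ℓ) (exp 1 * k / ℓ) x := by
    simpa using ((hasDerivAt_id x).const_mul (exp 1 * (k : ℝ))).div_const (ℓ : ℝ)
  refine HasDerivAt.congr_deriv (f := glExponent k d ℓ)
    ((hlinear.add ((hscaled.log (by positivity)).const_mul (ℓ : ℝ))).add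
      (((hasDerivAt_glLog hx.ne').log hL.ne').const_mul ((d : ℝ) / 2))) ?_
  field_simp
  ring

lemma continuousOn_glExponent (hk : 0 < k) (hℓ : 0 < ℓ) :
    ContinuousOn (glExponent k d ℓ) (Ioc 0 1) := by
  have hscaled : ContinuousOn (fun y : ℝ => log (exp 1 * k * y / ℓ)) (Ioc 0 1) :=
    (by fun_prop : Continuous fun y : ℝ => exp 1 * k * y / ℓ).continuousOn.log
      fun y hy => by have := hy.1; positivity
  have hglLog : ContinuousOn (fun y => log (glLog d ℓ y)) (Ioc 0 1) :=
    ContinuousOn.log (fun y hy => (hasDerivAt_glLog hy.1.ne').continuousAt.continuousWithinAt)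
      fun y hy => (one_pos.trans_le (one_le_glLog hy.1 hy.2)).ne'
  exact ((continuous_const.mul continuous_id).continuousOn.add
    (continuousOn_const.mul hscaled)).add (continuousOn_const.mul hglLog)

lemma monotoneOn_glExponent (hk : 0 < k) (hd : 0 < d) (hℓ : 0 < ℓ) :
    MonotoneOn (glExponent k d ℓ) (Ioc 0 1 ∩ Iic ((ℓ : ℝ) / (4 * k))) := by
  have hint : interior (Ioc 0 1 ∩ Iic ((ℓ : ℝ) / (4 * k))) = Ioo 0 1 ∩ Iio ((ℓ : ℝ) / (4 * k)) := by
    rw [interior_inter, interior_Ioc, interior_Iic]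
  refine monotoneOn_of_hasDerivWithinAt_nonneg
    (f' := fun y => (((ℓ : ℝ) - 2 * k * y) * glLog d ℓ y - ℓ / 2) / (y * glLog d ℓ y))
    ((convex_Ioc 0 1).inter (convex_Iic _))
    ((continuousOn_glExponent hk hℓ).mono inter_subset_left) (fun y hy => ?_) (fun y hy => ?_)
  all_goals rw [hint] at hy; obtain ⟨⟨hy0, hy1⟩, hya⟩ := hy
  · exact (hasDerivAt_glExponent hk hd hℓ hy0 hy1.le).hasDerivWithinAt
  · have hL := one_le_glLog (d := d) (ℓ := ℓ) hy0 hy1.le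
    have h4ky : 4 * (k : ℝ) * y ≤ ℓ := by
      rw [mem_Iio, lt_div_iff₀ (by positivity)] at hya; linarith
    have : ((ℓ : ℝ) - 2 * k * y) * 1 ≤ ((ℓ : ℝ) - 2 * k * y) * glLog d ℓ y :=
      mul_le_mul_of_nonneg_left hL (by linarith)
    exact div_nonneg (by linarith) (by positivity)

lemma antitoneOn_glExponent (hk : 0 < k) (hd : 0 < d) (hℓ : 0 < ℓ) :
    AntitoneOn (glExponent k d ℓ) (Ioc 0 1 ∩ Ici ((ℓ : ℝ) / (2 * k))) := by
  have hint : interior (Ioc 0 1 ∩ Ici ((ℓ : ℝ) / (2 * k))) = Ioo 0 1 ∩ Ioi ((ℓ : ℝ) / (2 * k)) := by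
    rw [interior_inter, interior_Ioc, interior_Ici]
  refine antitoneOn_of_hasDerivWithinAt_nonpos
    (f' := fun y => (((ℓ : ℝ) - 2 * k * y) * glLog d ℓ y - ℓ / 2) / (y * glLog d ℓ y))
    ((convex_Ioc 0 1).inter (convex_Ici _))
    ((continuousOn_glExponent hk hℓ).mono inter_subset_left) (fun y hy => ?_) (fun y hy => ?_)
  all_goals rw [hint] at hy; obtain ⟨⟨hy0, hy1⟩, hyb⟩ := hy
  · exact (hasDerivAt_glExponent hk hd hℓ hy0 hy1.le).hasDerivWithinAt
  · have hL := one_le_glLog (d := d) (ℓ := ℓ) hy0 hy1.le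
    have h2ky : (ℓ : ℝ) ≤ 2 * k * y := by
      rw [mem_Ioi, div_lt_iff₀ (by positivity)] at hyb; linarith
    have : ((ℓ : ℝ) - 2 * k * y) * glLog d ℓ y ≤ 0 :=
      mul_nonpos_of_nonpos_of_nonneg (by linarith) (by linarith)
    exact div_nonpos_of_nonpos_of_nonneg (by linarith) (by positivity)

lemma gl_le_of_mem_Icc (hk : 0 < k) (hℓ : 0 < ℓ) (hx1 : x ≤ 1)
    (hx : x ∈ Icc ((ℓ : ℝ) / (4 * k)) ((ℓ : ℝ) / (2 * k))) :
    gl k d ℓ x ≤ exp (-(ℓ : ℝ) / 2) * (exp 1 / 2) ^ ℓ *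
      (log (exp 1 * (4 * (k : ℝ) / ℓ) ^ ((ℓ : ℝ) / d))) ^ ((d : ℝ) / 2) := by
  obtain ⟨hax, hxb⟩ := hx
  have ha : (0 : ℝ) < ℓ / (4 * k) := by positivity
  have hx0 : 0 < x := ha.trans_le hax
  have h4kx : (ℓ : ℝ) ≤ 4 * k * x := by rw [div_le_iff₀ (by positivity)] at hax; linarith
  have h2kx : 2 * (k : ℝ) * x ≤ ℓ := by rw [le_div_iff₀ (by positivity)] at hxb; linarith
  have hlogBound : log (exp 1 * (4 * (k : ℝ) / ℓ) ^ ((ℓ : ℝ) / d)) = glLog d ℓ (ℓ / (4 * k)) := by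
    rw [← log_exp_one_div_rpow ha, ← inv_div, inv_rpow ha.le, ← div_eq_mul_inv]
  have hL := one_le_glLog (d := d) (ℓ := ℓ) hx0 hx1
  rw [gl_eq_glLog hx0, hlogBound]
  gcongr ?_ * ?_ * ?_
  · exact exp_le_exp.2 (by linarith)
  · refine pow_le_pow_left₀ (by positivity) ?_ ℓ
    rw [div_le_div_iff₀ (by positivity) two_pos]
    nlinarith [exp_pos 1]
  · exact rpow_le_rpow (by linarith) (glLog_le_glLog ha hax) (by positivity)

end

lemma exists_mem_Icc_isMaxOn_of_monotoneOn_of_antitoneOn {f : ℝ → ℝ} {s : Set ℝ} {a b : ℝ}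
    (hab : a ≤ b) (hs : Icc a b ⊆ s) (hf : ContinuousOn f (Icc a b))
    (hmono : MonotoneOn f (s ∩ Iic a)) (hanti : AntitoneOn f (s ∩ Ici b)) :
    ∃ c ∈ Icc a b, IsMaxOn f s c := by
  obtain ⟨c, hc, hmax⟩ := isCompact_Icc.exists_isMaxOn (nonempty_Icc.2 hab) hf
  refine ⟨c, hc, fun x hx => ?_⟩
  have ha : a ∈ Icc a b := left_mem_Icc.2 hab
  have hb : b ∈ Icc a b := right_mem_Icc.2 hab
  rcases le_or_gt x a with hxa | hax
  · exact (hmono ⟨hx, hxa⟩ ⟨hs ha, self_mem_Iic⟩ hxa).trans (hmax ha)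
  rcases le_or_gt x b with hxb | hbx
  · exact hmax ⟨hax.le, hxb⟩
  · exact (hanti ⟨hs hb, self_mem_Ici⟩ ⟨hx, hbx.le⟩ hbx.le).trans (hmax hb)

/-- `g_ℓ` attains its maximum over `(0,1]` at some `x* ∈ [ℓ/(4k), min(ℓ/(2k),1)]`, and
when `ℓ/(4k) ≤ 1` its supremum is at most
`e^{-ℓ/2} (e/2)^ℓ (ln(e·(4k/ℓ)^{ℓ/d}))^{d/2}`. -/
theorem stmt17 (k d ℓ : ℕ) (hk : 1 ≤ k) (hd : 1 ≤ d) (hℓ1 : 1 ≤ ℓ)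
    (hℓ : ℓ ≤ min d k) :
    (∃ xstar ∈ Set.Icc ((ℓ : ℝ) / (4 * k)) (min ((ℓ : ℝ) / (2 * k)) 1),
        ∀ x ∈ Set.Ioc (0 : ℝ) 1, gl k d ℓ x ≤ gl k d ℓ xstar) ∧
    ((ℓ : ℝ) / (4 * k) ≤ 1 →
      ∀ x ∈ Set.Ioc (0 : ℝ) 1,
        gl k d ℓ x ≤ Real.exp (-(ℓ : ℝ) / 2) * (Real.exp 1 / 2) ^ ℓ *
          (Real.log (Real.exp 1 * (4 * (k : ℝ) / ℓ) ^ ((ℓ : ℝ) / (d : ℝ)))) ^ ((d : ℝ) / 2)) := by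
  have hk0 : (0 : ℝ) < k := by exact_mod_cast hk
  have hℓk : (ℓ : ℝ) ≤ k := by exact_mod_cast hℓ.trans (min_le_right d k)
  have hab : (ℓ : ℝ) / (4 * k) ≤ ℓ / (2 * k) := by gcongr; norm_num
  have hb1 : (ℓ : ℝ) / (2 * k) ≤ 1 := by rw [div_le_one (by positivity)]; linarith
  have hIcc : Icc ((ℓ : ℝ) / (4 * k)) (ℓ / (2 * k)) ⊆ Ioc 0 1 :=
    fun x hx => ⟨lt_of_lt_of_le (by positivity) hx.1, hx.2.trans hb1⟩
  obtain ⟨c, hc, hmax⟩ := exists_mem_Icc_isMaxOn_of_monotoneOn_of_antitoneOn hab hIcc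
    ((continuousOn_glExponent hk hℓ1).mono hIcc) (monotoneOn_glExponent hk hd hℓ1)
    (antitoneOn_glExponent hk hd hℓ1)
  have hgl : ∀ x ∈ Ioc (0 : ℝ) 1, gl k d ℓ x ≤ gl k d ℓ c := fun x hx => by
    rw [gl_eq_exp_glExponent hk hℓ1 hx.1 hx.2, gl_eq_exp_glExponent hk hℓ1 (hIcc hc).1 (hIcc hc).2]
    exact exp_le_exp.2 (hmax hx)
  refine ⟨⟨c, ⟨hc.1, by rw [min_eq_left hb1]; exact hc.2⟩, hgl⟩, fun _ x hx => ?_⟩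
  exact (hgl x hx).trans (gl_le_of_mem_Icc hk hℓ1 (hIcc hc).2 hc)
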